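/- arXiv:2409.13666 — 2 statements merged into one kernel-verified Lean document; each statement's English description precedes it below -/
import Mathlib

section
/- Let G be a finite connected simple graph and let x ≠ y be vertices of G. Then, as α → 1 from below, κ_α(x,y)/(1−α) converges to inf { ∇_{xy} Δf : f is 1-Lipschitz and ∇_{yx} f = 1 }; that is, the Lin–Lu–Yau curvature defined as the limit of the normalized α-lazy Ollivier curvatures equals the limit-free Laplacian formulation. -/
/-!
For `α ≥ 1/2` the quotient `κ_α(x,y)/(1-α)` already equals `κ(x,y)`, so the limit is
eventually constant. Testing `W(m_x^α, m_y^α)` against `-f`, for `f` 1-Lipschitz with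
`∇_{yx} f = 1`, gives `κ_α/(1-α) ≤ ∇_{xy} Δf`. Conversely, Kantorovich duality (the support of
an optimal coupling is cyclically monotone, and Rockafellar's chain infimum turns it into a
1-Lipschitz potential) provides an optimal potential `g`; for `α ≥ 1/2` it can be stretched
to `g x - g y = d(x,y)` without losing optimality, and then `-g` attains the infimum.
-/

open scoped BigOperators

namespace LLY

variable {V : Type*}

/-- Degree of a vertex (as `Nat.card` of its neighbor set; agrees with the usual
degree in a locally finite graph). -/
noncomputable def deg (G : SimpleGraph V) (u : V) : ℕ := Nat.card (G.neighborSet u)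

/-- `G` is locally finite. -/
def LocFin (G : SimpleGraph V) : Prop := ∀ v : V, (G.neighborSet v).Finite

/-- `f` is 1-Lipschitz with respect to the graph distance of `G`. -/
def Lip1 (G : SimpleGraph V) (f : V → ℝ) : Prop :=
  ∀ a b : V, |f a - f b| ≤ (G.dist a b : ℝ)

/-- The (normalized) graph Laplacian `Δf(u) = (1/d(u)) ∑_{v ∈ N(u)} (f v - f u)`. -/
noncomputable def lap (G : SimpleGraph V) (f : V → ℝ) (u : V) : ℝ :=
  (1 / (deg G u : ℝ)) * ∑ᶠ v ∈ G.neighborSet u, (f v - f u)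

/-- The gradient `∇_{xy} f = (f x - f y)/d(x,y)`. -/
noncomputable def grad (G : SimpleGraph V) (f : V → ℝ) (x y : V) : ℝ :=
  (f x - f y) / (G.dist x y : ℝ)

/-- Lin–Lu–Yau curvature of the pair `{x,y}` (limit-free Münch–Wojciechowski form):
`κ(x,y) = inf { ∇_{xy} Δf : f 1-Lipschitz, ∇_{yx} f = 1 }`. -/
noncomputable def kappa (G : SimpleGraph V) (x y : V) : ℝ :=
  sInf {k : ℝ | ∃ f : V → ℝ, Lip1 G f ∧ grad G f y x = 1 ∧ k = grad G (lap G f) x y}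

end LLY

namespace LLY

variable {V : Type*}

open Classical in
/-- The `α`-lazy random walk distribution at `x`:
`m_x^α(v) = α` if `v = x`, `(1-α)/d(x)` if `v ∈ N(x)`, and `0` otherwise. -/
noncomputable def mAlpha (G : SimpleGraph V) (α : ℝ) (x : V) : V → ℝ := fun v =>
  if v = x then α else if v ∈ G.neighborSet x then (1 - α) / (deg G x : ℝ) else 0

/-- `A` is a coupling between the distributions `m₁` and `m₂` on a finite vertex set. -/
def IsCouplingW [Fintype V] (A : V × V → ℝ) (m₁ m₂ : V → ℝ) : Prop :=
  (∀ p : V × V, 0 ≤ A p ∧ A p ≤ 1) ∧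
  (∀ u : V, ∑ v : V, A (u, v) = m₁ u) ∧
  (∀ v : V, ∑ u : V, A (u, v) = m₂ v)

/-- The Wasserstein-1 transportation distance between `m₁` and `m₂`:
the infimum of `∑_{u,v} A(u,v) d(u,v)` over all couplings `A`. -/
noncomputable def W (G : SimpleGraph V) [Fintype V] (m₁ m₂ : V → ℝ) : ℝ :=
  sInf {c : ℝ | ∃ A : V × V → ℝ, IsCouplingW A m₁ m₂ ∧
    c = ∑ p : V × V, A p * (G.dist p.1 p.2 : ℝ)}

/-- The `α`-lazy Ollivier curvature `κ_α(x,y) = 1 - W(m_x^α, m_y^α)/d(x,y)`. -/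
noncomputable def kappaAlpha (G : SimpleGraph V) [Fintype V] (α : ℝ) (x y : V) : ℝ :=
  1 - W G (mAlpha G α x) (mAlpha G α y) / (G.dist x y : ℝ)

end LLY

namespace LLY

open Finset SimpleGraph

variable {V : Type*} {G : SimpleGraph V}

section Laplacian

variable [Fintype V]

lemma deg_eq_degree [DecidableRel G.Adj] (u : V) : deg G u = G.degree u := by
  rw [deg, Nat.card_eq_fintype_card, card_neighborSet_eq_degree]

lemma lap_eq_sum [DecidableRel G.Adj] (f : V → ℝ) (u : V) :
    lap G f u = (1 / (G.degree u : ℝ)) * ∑ v ∈ G.neighborFinset u, (f v - f u) := by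
  rw [lap, deg_eq_degree, ← finsum_mem_coe_finset, coe_neighborFinset]

lemma lap_sub (f g : V → ℝ) (u : V) : lap G (f - g) u = lap G f u - lap G g u := by
  classical
  simp only [lap_eq_sum, Pi.sub_apply, ← mul_sub, ← sum_sub_distrib]
  congr 1
  exact sum_congr rfl fun v _ => by ring

lemma lap_neg (f : V → ℝ) (u : V) : lap G (-f) u = -lap G f u := by
  rw [← zero_sub, lap_sub]
  simp [lap]

lemma lap_le_of_forall_le {h : V → ℝ} {c : ℝ} (hc : ∀ v, h v ≤ c) (u : V) :
    lap G h u ≤ c - h u := by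
  classical
  rw [lap_eq_sum]
  rcases (G.degree u).eq_zero_or_pos with hd | hd
  · simp [hd, hc u]
  · have hsum : ∑ v ∈ G.neighborFinset u, (h v - h u) ≤ G.degree u * (c - h u) := by
      simpa [← card_neighborFinset_eq_degree] using
        sum_le_card_nsmul _ _ _ fun v _ => sub_le_sub_right (hc v) (h u)
    rwa [one_div, inv_mul_le_iff₀ (by exact_mod_cast hd)]

lemma le_lap_of_forall_le {h : V → ℝ} {c : ℝ} (hc : ∀ v, c ≤ h v) (u : V) :
    c - h u ≤ lap G h u := by
  have := lap_le_of_forall_le (G := G) (h := -h) (c := -c) (fun v => neg_le_neg (hc v)) u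
  rw [lap_neg, Pi.neg_apply] at this
  linarith

end Laplacian

section Lipschitz

variable {f g : V → ℝ}

lemma Lip1.sub_le (hf : Lip1 G f) (a b : V) : f a - f b ≤ G.dist a b :=
  (le_abs_self _).trans (hf a b)

lemma lip1_of_le_add (hf : ∀ a b, f a ≤ f b + G.dist a b) : Lip1 G f := by
  intro a b
  have hba := hf b a
  rw [dist_comm] at hba
  rw [abs_sub_le_iff]
  constructor <;> linarith [hf a b]

lemma Lip1.neg (hf : Lip1 G f) : Lip1 G (-f) := fun a b => by
  simpa [neg_add_eq_sub, abs_sub_comm, dist_comm] using hf b a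

lemma Lip1.max (hf : Lip1 G f) (hg : Lip1 G g) : Lip1 G fun z => f z ⊔ g z :=
  fun a b => (abs_max_sub_max_le_max _ _ _ _).trans (max_le (hf a b) (hg a b))

lemma lip1_const_sub_dist (hconn : G.Connected) (c : ℝ) (x : V) :
    Lip1 G fun z => c - G.dist x z :=
  lip1_of_le_add fun a b => by
    have := hconn.dist_triangle (u := x) (v := a) (w := b)
    have : (G.dist x b : ℝ) ≤ G.dist x a + G.dist a b := by exact_mod_cast this
    linarith

lemma Lip1.exists_stretch (hconn : G.Connected) (hf : Lip1 G f) (x y : V) :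
    ∃ g : V → ℝ, Lip1 G g ∧
      (∀ z, f z ≤ g z ∧ g z ≤ f z + (G.dist x y - (f x - f y))) ∧
      g x = f y + G.dist x y ∧ g y = f y := by
  refine ⟨fun z => f z ⊔ (f y + G.dist x y - G.dist x z),
    hf.max (lip1_const_sub_dist hconn _ x), fun z => ⟨le_max_left _ _, ?_⟩, ?_, ?_⟩
  · have hxz := hf.sub_le x z
    have hxy := hf.sub_le x y
    exact max_le (by linarith) (by linarith)
  · simp only [dist_self, Nat.cast_zero, sub_zero, sup_eq_right]
    linarith [hf.sub_le x y]
  · simp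

end Lipschitz

section LazyWalk

lemma mAlpha_nonneg {α : ℝ} (hα₀ : 0 ≤ α) (hα₁ : α ≤ 1) (x v : V) : 0 ≤ mAlpha G α x v := by
  unfold mAlpha
  split_ifs
  · exact hα₀
  · exact div_nonneg (by linarith) (Nat.cast_nonneg _)
  · exact le_rfl

variable [Fintype V]

lemma deg_pos {x y : V} (h : G.Reachable x y) (hxy : x ≠ y) : 0 < deg G x := by
  classical
  rw [deg_eq_degree]
  exact h.degree_pos_left hxy

lemma sum_mul_mAlpha {x : V} (hx : 0 < deg G x) (α : ℝ) (f : V → ℝ) :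
    ∑ v, f v * mAlpha G α x v = f x + (1 - α) * lap G f x := by
  classical
  have hterm : ∀ v, f v * mAlpha G α x v = (if v = x then α * f x else 0) +
      if v ∈ G.neighborFinset x then (1 - α) / deg G x * f v else 0 := by
    intro v
    by_cases hv : v = x
    · subst hv
      simp [mAlpha, mul_comm]
    · simp [mAlpha, hv, mul_comm]
  have hd : (deg G x : ℝ) ≠ 0 := by positivity
  rw [sum_congr rfl fun v _ => hterm v, sum_add_distrib, sum_ite_eq', if_pos (mem_univ x),
    sum_ite_mem, univ_inter, ← mul_sum, lap_eq_sum, sum_sub_distrib, sum_const,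
    card_neighborFinset_eq_degree, ← deg_eq_degree, nsmul_eq_mul]
  field_simp
  ring

lemma sum_mAlpha {x : V} (hx : 0 < deg G x) (α : ℝ) : ∑ v, mAlpha G α x v = 1 := by
  simpa [lap] using sum_mul_mAlpha hx α 1

end LazyWalk

section Transport

variable [Fintype V] {m₁ m₂ : V → ℝ} {A : V × V → ℝ}

noncomputable def cost (G : SimpleGraph V) (A : V × V → ℝ) : ℝ :=
  ∑ p : V × V, A p * (G.dist p.1 p.2 : ℝ)

lemma le_one_of_sum_eq_one {m : V → ℝ} (hm : ∀ v, 0 ≤ m v) (hs : ∑ v, m v = 1) (u : V) :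
    m u ≤ 1 :=
  hs ▸ single_le_sum (fun v _ => hm v) (mem_univ u)

lemma isCouplingW_of_nonneg (hA : ∀ p, 0 ≤ A p) (hrow : ∀ u, ∑ v, A (u, v) = m₁ u)
    (hcol : ∀ v, ∑ u, A (u, v) = m₂ v) (hm₁ : ∀ u, m₁ u ≤ 1) : IsCouplingW A m₁ m₂ := by
  refine ⟨fun p => ⟨hA p, ?_⟩, hrow, hcol⟩
  calc A p = A (p.1, p.2) := rfl
    _ ≤ ∑ v, A (p.1, v) := single_le_sum (fun v _ => hA (p.1, v)) (mem_univ p.2)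
    _ ≤ 1 := (hrow p.1).trans_le (hm₁ p.1)

lemma isCouplingW_mul (hm₁ : ∀ v, 0 ≤ m₁ v) (hs₁ : ∑ v, m₁ v = 1) (hm₂ : ∀ v, 0 ≤ m₂ v)
    (hs₂ : ∑ v, m₂ v = 1) : IsCouplingW (fun p => m₁ p.1 * m₂ p.2) m₁ m₂ :=
  isCouplingW_of_nonneg (fun p => mul_nonneg (hm₁ p.1) (hm₂ p.2))
    (fun u => by simp only [← mul_sum, hs₂, mul_one])
    (fun v => by simp only [← sum_mul, hs₁, one_mul])
    (le_one_of_sum_eq_one hm₁ hs₁)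

lemma IsCouplingW.sum_mul_fst (hA : IsCouplingW A m₁ m₂) (f : V → ℝ) :
    ∑ p : V × V, f p.1 * A p = ∑ v, f v * m₁ v := by
  rw [Fintype.sum_prod_type]
  exact sum_congr rfl fun u _ => by rw [← hA.2.1 u, mul_sum]

lemma IsCouplingW.sum_mul_snd (hA : IsCouplingW A m₁ m₂) (f : V → ℝ) :
    ∑ p : V × V, f p.2 * A p = ∑ v, f v * m₂ v := by
  rw [Fintype.sum_prod_type_right]
  exact sum_congr rfl fun v _ => by rw [← hA.2.2 v, mul_sum]

lemma IsCouplingW.sum_sub_sum_eq (hA : IsCouplingW A m₁ m₂) (f : V → ℝ) :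
    ∑ v, f v * m₁ v - ∑ v, f v * m₂ v = ∑ p : V × V, (f p.1 - f p.2) * A p := by
  rw [← hA.sum_mul_fst, ← hA.sum_mul_snd, ← sum_sub_distrib]
  exact sum_congr rfl fun p _ => by ring

lemma IsCouplingW.sub_le_cost (hA : IsCouplingW A m₁ m₂) {f : V → ℝ} (hf : Lip1 G f) :
    ∑ v, f v * m₁ v - ∑ v, f v * m₂ v ≤ cost G A := by
  rw [hA.sum_sub_sum_eq, cost]
  exact sum_le_sum fun p _ => by
    rw [mul_comm (A p)]
    exact mul_le_mul_of_nonneg_right (hf.sub_le p.1 p.2) (hA.1 p).1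

lemma isClosed_setOf_isCouplingW (m₁ m₂ : V → ℝ) :
    IsClosed {A : V × V → ℝ | IsCouplingW A m₁ m₂} := by
  simp only [IsCouplingW, Set.ofPred_and, Set.ofPred_forall]
  refine (isClosed_iInter fun p => ?_).inter
    ((isClosed_iInter fun u => ?_).inter (isClosed_iInter fun v => ?_))
  · exact (isClosed_le continuous_const (continuous_apply p)).inter
      (isClosed_le (continuous_apply p) continuous_const)
  all_goals exact isClosed_eq (by fun_prop) continuous_const

lemma exists_optimal_coupling (hne : ∃ A, IsCouplingW A m₁ m₂) :
    ∃ A, IsCouplingW A m₁ m₂ ∧ ∀ B, IsCouplingW B m₁ m₂ → cost G A ≤ cost G B := by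
  have hcompact : IsCompact {A : V × V → ℝ | IsCouplingW A m₁ m₂} :=
    (isCompact_univ_pi fun _ => isCompact_Icc).of_isClosed_subset
      (isClosed_setOf_isCouplingW m₁ m₂) fun A hA p _ => hA.1 p
  have hcont : Continuous (cost G) :=
    continuous_finsetSum _ fun p _ => (continuous_apply p).mul continuous_const
  obtain ⟨A, hA, hmin⟩ := hcompact.exists_isMinOn hne hcont.continuousOn
  exact ⟨A, hA, fun B hB => hmin hB⟩

lemma W_eq_cost (hA : IsCouplingW A m₁ m₂)
    (hopt : ∀ B, IsCouplingW B m₁ m₂ → cost G A ≤ cost G B) : W G m₁ m₂ = cost G A :=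
  IsLeast.csInf_eq ⟨⟨A, hA, rfl⟩, by rintro c ⟨B, hB, rfl⟩; exact hopt B hB⟩

lemma sub_le_W (hne : ∃ A, IsCouplingW A m₁ m₂) {f : V → ℝ} (hf : Lip1 G f) :
    ∑ v, f v * m₁ v - ∑ v, f v * m₂ v ≤ W G m₁ m₂ := by
  obtain ⟨A, hA, hopt⟩ := exists_optimal_coupling (G := G) hne
  exact (W_eq_cost hA hopt).symm ▸ hA.sub_le_cost hf

end Transport

section Lists

lemma exists_eq_append_cons_append_cons_of_not_nodup {α : Type*} {l : List α} (hl : ¬l.Nodup) :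
    ∃ P a Q R, l = P ++ a :: (Q ++ a :: R) := by
  induction l with
  | nil => exact absurd List.nodup_nil hl
  | cons b l ih =>
    by_cases hb : b ∈ l
    · obtain ⟨Q, R, rfl⟩ := List.append_of_mem hb
      exact ⟨[], b, Q, R, rfl⟩
    · obtain ⟨P, a, Q, R, rfl⟩ := ih fun hnd => hl (List.nodup_cons.2 ⟨hb, hnd⟩)
      exact ⟨b :: P, a, Q, R, rfl⟩

variable {α β : Type*} [BEq α] [LawfulBEq α] [BEq β] [LawfulBEq β]

lemma sum_count_mul [Fintype α] (l : List α) (F : α → ℝ) :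
    ∑ a, (l.count a : ℝ) * F a = (l.map F).sum := by
  induction l with
  | nil => simp
  | cons a l ih =>
    classical
    simp [List.count_cons, add_mul, sum_add_distrib, ih, add_comm, beq_iff_eq]

lemma sum_count_fst [Fintype β] (l : List (α × β)) (a : α) :
    ∑ b, l.count (a, b) = (l.map Prod.fst).count a := by
  induction l with
  | nil => simp
  | cons p l ih =>
    obtain ⟨a', b'⟩ := p
    classical
    by_cases ha : a' = a <;> simp [List.count_cons, sum_add_distrib, ih, ha, beq_iff_eq]

lemma sum_count_snd [Fintype α] (l : List (α × β)) (b : β) :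
    ∑ a, l.count (a, b) = (l.map Prod.snd).count b := by
  have hswap (a : α) : l.count (a, b) = (l.map Prod.swap).count (b, a) :=
    (List.count_map_of_injective l _ Prod.swap_injective (a, b)).symm
  simp only [hswap, sum_count_fst, List.map_map]
  rfl

end Lists

section CyclicalMonotonicity

noncomputable def pairDist (G : SimpleGraph V) (p : V × V) : ℝ := G.dist p.1 p.2

/-- `shiftTargets u [(a₁, b₁), …, (aₙ, bₙ)] v = [(u, b₁), (a₁, b₂), …, (aₙ, v)]`: the cycle
`(u, v) :: Q` with its targets rotated by one step. -/
def shiftTargets : V → List (V × V) → V → List (V × V)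
  | u, [], v => [(u, v)]
  | u, (a, b) :: Q, v => (u, b) :: shiftTargets a Q v

lemma shiftTargets_map_fst (u v : V) (Q : List (V × V)) :
    (shiftTargets u Q v).map Prod.fst = u :: Q.map Prod.fst := by
  induction Q generalizing u with
  | nil => rfl
  | cons q Q ih => simp [shiftTargets, ih]

lemma shiftTargets_map_snd (u v : V) (Q : List (V × V)) :
    (shiftTargets u Q v).map Prod.snd = Q.map Prod.snd ++ [v] := by
  induction Q generalizing u with
  | nil => rfl
  | cons q Q ih => simp [shiftTargets, ih]

def CyclicallyMonotone (G : SimpleGraph V) (S : Set (V × V)) : Prop :=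
  ∀ u v Q, (u, v) ∈ S → (∀ q ∈ Q, q ∈ S) →
    (((u, v) :: Q).map (pairDist G)).sum ≤ ((shiftTargets u Q v).map (pairDist G)).sum

/-- Otherwise moving a little mass from the cycle to the rotated cycle would give a cheaper
coupling. -/
theorem cyclicallyMonotone_support [Fintype V] {m₁ m₂ : V → ℝ} {A : V × V → ℝ}
    (hA : IsCouplingW A m₁ m₂) (hm₁ : ∀ u, m₁ u ≤ 1)
    (hopt : ∀ B, IsCouplingW B m₁ m₂ → cost G A ≤ cost G B) :
    CyclicallyMonotone G {p | 0 < A p} := by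
  classical
  intro u v Q huv hQ
  set L := (u, v) :: Q
  set R := shiftTargets u Q v
  have hpos : ∀ p ∈ L, 0 < A p := List.forall_mem_cons.2 ⟨huv, hQ⟩
  obtain ⟨p₀, hp₀, hp₀_min⟩ := L.toFinset.exists_min_image A ⟨(u, v), by simp [L]⟩
  have hlen : (0 : ℝ) < L.length := by simp only [L, List.length_cons]; positivity
  set ε := A p₀ / L.length
  have hε : 0 < ε := div_pos (hpos _ (List.mem_toFinset.1 hp₀)) hlen
  set D : V × V → ℝ := fun p => (R.count p : ℝ) - L.count p
  have hrow (w : V) : ∑ v', D (w, v') = 0 := by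
    simp only [D, sum_sub_distrib, ← Nat.cast_sum, sum_count_fst, R, L, shiftTargets_map_fst,
      List.map_cons, sub_self]
  have hcol (w : V) : ∑ u', D (u', w) = 0 := by
    simp only [D, sum_sub_distrib, ← Nat.cast_sum, sum_count_snd, R, shiftTargets_map_snd,
      ((Q.map Prod.snd).perm_append_singleton v).count_eq, L, List.map_cons, sub_self]
  have hnonneg (p : V × V) : 0 ≤ A p + ε * D p := by
    by_cases hp : p ∈ L
    · have hcount : ε * L.count p ≤ A p :=
        calc ε * L.count p ≤ ε * L.length := by gcongr; exact List.count_le_length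
          _ = A p₀ := div_mul_cancel₀ _ hlen.ne'
          _ ≤ A p := hp₀_min p (List.mem_toFinset.2 hp)
      have : 0 ≤ ε * R.count p := by positivity
      simp only [D]
      linarith
    · simp only [D, List.count_eq_zero_of_not_mem hp, Nat.cast_zero, sub_zero]
      exact add_nonneg (hA.1 p).1 (by positivity)
  have hB : IsCouplingW (fun p => A p + ε * D p) m₁ m₂ :=
    isCouplingW_of_nonneg hnonneg
      (fun w => by rw [sum_add_distrib, ← mul_sum, hrow, mul_zero, add_zero, hA.2.1])
      (fun w => by rw [sum_add_distrib, ← mul_sum, hcol, mul_zero, add_zero, hA.2.2]) hm₁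
  have hcost : cost G (fun p => A p + ε * D p) =
      cost G A + ε * ((R.map (pairDist G)).sum - (L.map (pairDist G)).sum) := by
    simp only [cost, D, add_mul, sum_add_distrib, mul_assoc, ← mul_sum, sub_mul,
      sum_sub_distrib, ← sum_count_mul, pairDist]
  have := hopt _ hB
  rw [hcost] at this
  nlinarith

end CyclicalMonotonicity

section Potential

/-- `chainValue G z [(a₁, b₁), …, (aₙ, bₙ)] = d(z, b₁) - d(a₁, b₁) + d(a₁, b₂) - … - d(aₙ, bₙ)`,
the Rockafellar potential of `z` along a chain of pairs. -/
noncomputable def chainValue (G : SimpleGraph V) : V → List (V × V) → ℝ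
  | _, [] => 0
  | z, (a, b) :: L => G.dist z b - G.dist a b + chainValue G a L

lemma chainValue_le_add_dist (hconn : G.Connected) (a b : V) (L : List (V × V)) :
    chainValue G a L ≤ chainValue G b L + G.dist a b := by
  match L with
  | [] => simp [chainValue]
  | (c, d) :: L =>
    have : (G.dist a d : ℝ) ≤ G.dist a b + G.dist b d := by exact_mod_cast hconn.dist_triangle
    simp only [chainValue]
    linarith

lemma neg_sum_pairDist_le_chainValue (z : V) (L : List (V × V)) :
    -(L.map (pairDist G)).sum ≤ chainValue G z L := by
  induction L generalizing z with
  | nil => simp [chainValue]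
  | cons p L ih =>
    obtain ⟨a, b⟩ := p
    have := ih a
    simp only [chainValue, List.map_cons, List.sum_cons, pairDist]
    linarith [(G.dist z b).cast_nonneg (α := ℝ)]

lemma chainValue_append_cons (u v z : V) (Q R : List (V × V)) :
    chainValue G z (Q ++ (u, v) :: R) = ((shiftTargets z Q v).map (pairDist G)).sum -
      (((u, v) :: Q).map (pairDist G)).sum + chainValue G u R := by
  induction Q generalizing z with
  | nil => simp [shiftTargets, chainValue, pairDist]
  | cons q Q ih =>
    obtain ⟨a, b⟩ := q
    simp only [List.cons_append, chainValue, ih, shiftTargets, List.map_cons, List.sum_cons,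
      pairDist]
    ring

lemma chainValue_le_of_cyclicallyMonotone {S : Set (V × V)} (hS : CyclicallyMonotone G S)
    {p : V × V} {Q : List (V × V)} (hp : p ∈ S) (hQ : ∀ q ∈ Q, q ∈ S)
    (P R : List (V × V)) (z : V) :
    chainValue G z (P ++ p :: R) ≤ chainValue G z (P ++ p :: (Q ++ p :: R)) := by
  induction P generalizing z with
  | nil =>
    obtain ⟨u, v⟩ := p
    have := hS u v Q hp hQ
    simp only [List.nil_append, chainValue, chainValue_append_cons]
    linarith
  | cons q P ih =>
    obtain ⟨a, b⟩ := q
    simpa only [List.cons_append, chainValue, add_le_add_iff_left] using ih a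

lemma exists_nodup_chainValue_le {S : Set (V × V)} (hS : CyclicallyMonotone G S) (z : V)
    (L : List (V × V)) (hL : ∀ p ∈ L, p ∈ S) :
    ∃ L' : List (V × V), (∀ p ∈ L', p ∈ S) ∧ L'.Nodup ∧ chainValue G z L' ≤ chainValue G z L := by
  induction hn : L.length using Nat.strong_induction_on generalizing L with
  | _ n ih =>
    by_cases hnd : L.Nodup
    · exact ⟨L, hL, hnd, le_rfl⟩
    obtain ⟨P, p, Q, R, rfl⟩ := exists_eq_append_cons_append_cons_of_not_nodup hnd
    have hLS : ∀ q ∈ P ++ p :: R, q ∈ S := fun q hq => hL q (by simp at hq ⊢; tauto)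
    obtain ⟨L', hL'S, hL'nd, hL'le⟩ :=
      ih _ (by simp [← hn]) (P ++ p :: R) hLS rfl
    exact ⟨L', hL'S, hL'nd, hL'le.trans (chainValue_le_of_cyclicallyMonotone hS
      (hL p (by simp)) (fun q hq => hL q (by simp [hq])) P R z)⟩

lemma neg_sum_univ_pairDist_le_chainValue [Fintype V] {S : Set (V × V)} (hS : CyclicallyMonotone G S)
    (z : V) (L : List (V × V)) (hL : ∀ p ∈ L, p ∈ S) :
    -∑ p : V × V, pairDist G p ≤ chainValue G z L := by
  classical
  obtain ⟨L', -, hnd, hle⟩ := exists_nodup_chainValue_le hS z L hL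
  have : (L'.map (pairDist G)).sum ≤ ∑ p, pairDist G p := by
    rw [← List.sum_toFinset _ hnd]
    exact sum_le_univ_sum_of_nonneg fun p => Nat.cast_nonneg _
  linarith [neg_sum_pairDist_le_chainValue (G := G) z L']

/-- Rockafellar's construction: the infimum of `chainValue G z L` over chains `L` in `S`. -/
theorem exists_lip1_of_cyclicallyMonotone [Fintype V] (hconn : G.Connected) {S : Set (V × V)}
    (hS : CyclicallyMonotone G S) :
    ∃ f : V → ℝ, Lip1 G f ∧ ∀ p ∈ S, f p.1 - f p.2 = G.dist p.1 p.2 := by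
  set chains : V → Set ℝ := fun z => {c | ∃ L, (∀ p ∈ L, p ∈ S) ∧ chainValue G z L = c}
  have hne (z : V) : (chains z).Nonempty := ⟨0, [], by simp, rfl⟩
  have hbdd (z : V) : BddBelow (chains z) := by
    refine ⟨-∑ p, pairDist G p, ?_⟩
    rintro _ ⟨L, hL, rfl⟩
    exact neg_sum_univ_pairDist_le_chainValue hS z L hL
  set f : V → ℝ := fun z => sInf (chains z)
  have hle (z : V) (L : List (V × V)) (hL : ∀ p ∈ L, p ∈ S) : f z ≤ chainValue G z L :=
    csInf_le (hbdd z) ⟨L, hL, rfl⟩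
  have hlip (a b : V) : f a ≤ f b + G.dist a b := by
    have : f a - G.dist a b ≤ f b := by
      refine le_csInf (hne b) ?_
      rintro _ ⟨L, hL, rfl⟩
      linarith [hle a L hL, chainValue_le_add_dist hconn a b L]
    linarith
  refine ⟨f, lip1_of_le_add hlip, fun ⟨u, v⟩ huv => ?_⟩
  have : f v + G.dist u v ≤ f u := by
    refine le_csInf (hne u) ?_
    rintro _ ⟨L, hL, rfl⟩
    have := hle v ((u, v) :: L) (List.forall_mem_cons.2 ⟨huv, hL⟩)
    simp only [chainValue, SimpleGraph.dist_self, Nat.cast_zero, zero_sub] at this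
    linarith
  linarith [hlip u v]

end Potential

/-- Kantorovich–Rubinstein duality, attained. -/
theorem exists_lip1_sub_eq_W [Fintype V] (hconn : G.Connected) {m₁ m₂ : V → ℝ}
    (hm₁ : ∀ v, 0 ≤ m₁ v) (hs₁ : ∑ v, m₁ v = 1) (hm₂ : ∀ v, 0 ≤ m₂ v) (hs₂ : ∑ v, m₂ v = 1) :
    ∃ f : V → ℝ, Lip1 G f ∧ ∑ v, f v * m₁ v - ∑ v, f v * m₂ v = W G m₁ m₂ := by
  obtain ⟨A, hA, hopt⟩ :=
    exists_optimal_coupling (G := G) ⟨_, isCouplingW_mul hm₁ hs₁ hm₂ hs₂⟩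
  obtain ⟨f, hf, hfS⟩ := exists_lip1_of_cyclicallyMonotone hconn
    (cyclicallyMonotone_support hA (le_one_of_sum_eq_one hm₁ hs₁) hopt)
  refine ⟨f, hf, ?_⟩
  rw [W_eq_cost hA hopt, hA.sum_sub_sum_eq, cost]
  refine sum_congr rfl fun p _ => ?_
  rcases (hA.1 p).1.eq_or_lt with h | h
  · rw [← h, mul_zero, zero_mul]
  · rw [hfS p h, mul_comm]

section Curvature

variable [Fintype V] {x y : V} {α : ℝ}

lemma sub_le_W_mAlpha (hconn : G.Connected) (hxy : x ≠ y) (hα₀ : 0 ≤ α) (hα₁ : α ≤ 1)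
    {f : V → ℝ} (hf : Lip1 G f) :
    f x - f y + (1 - α) * (lap G f x - lap G f y) ≤ W G (mAlpha G α x) (mAlpha G α y) := by
  have hx := deg_pos (hconn.preconnected x y) hxy
  have hy := deg_pos (hconn.preconnected y x) hxy.symm
  have := sub_le_W (G := G) ⟨_, isCouplingW_mul (mAlpha_nonneg hα₀ hα₁ x) (sum_mAlpha hx α)
    (mAlpha_nonneg hα₀ hα₁ y) (sum_mAlpha hy α)⟩ hf
  rwa [sum_mul_mAlpha hx, sum_mul_mAlpha hy, add_sub_add_comm, ← mul_sub] at this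

/-- Raising an optimal potential `f` to the cone `f y + d(x,y) - d(x,·)` adds the gap
`t = d(x,y) - (f x - f y)` to `f x - f y` and changes the Laplacian term by at most
`2 (1 - α) t ≤ t`, so optimality survives. -/
lemma exists_lip1_eq_W_mAlpha (hconn : G.Connected) (hxy : x ≠ y) (hα : 1 / 2 ≤ α)
    (hα₁ : α ≤ 1) :
    ∃ g : V → ℝ, Lip1 G g ∧ g x - g y = G.dist x y ∧
      g x - g y + (1 - α) * (lap G g x - lap G g y) = W G (mAlpha G α x) (mAlpha G α y) := by
  have hx := deg_pos (hconn.preconnected x y) hxy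
  have hy := deg_pos (hconn.preconnected y x) hxy.symm
  have hα₀ : 0 ≤ α := by linarith
  obtain ⟨f, hf, hfW⟩ := exists_lip1_sub_eq_W hconn (mAlpha_nonneg hα₀ hα₁ x)
    (sum_mAlpha hx α) (mAlpha_nonneg hα₀ hα₁ y) (sum_mAlpha hy α)
  rw [sum_mul_mAlpha hx, sum_mul_mAlpha hy] at hfW
  obtain ⟨g, hg, hgf, hgx, hgy⟩ := hf.exists_stretch hconn x y
  set t := (G.dist x y : ℝ) - (f x - f y)
  have hlapx : -t ≤ lap G g x - lap G f x := by
    have := le_lap_of_forall_le (G := G) (h := g - f) (c := 0)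
      (fun z => sub_nonneg.2 (hgf z).1) x
    rw [lap_sub, Pi.sub_apply, hgx] at this
    linarith
  have hlapy : lap G g y - lap G f y ≤ t := by
    have := lap_le_of_forall_le (G := G) (h := g - f) (c := t)
      (fun z => by simp only [Pi.sub_apply]; linarith [(hgf z).2]) y
    rwa [lap_sub, Pi.sub_apply, hgy, sub_self, sub_zero] at this
  have ht : 0 ≤ t := sub_nonneg.2 (hf.sub_le x y)
  refine ⟨g, hg, by rw [hgx, hgy]; ring, le_antisymm (sub_le_W_mAlpha hconn hxy hα₀ hα₁ hg) ?_⟩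
  rw [← hfW]
  nlinarith

theorem kappaAlpha_div_le (hconn : G.Connected) (hxy : x ≠ y) (hα₀ : 0 ≤ α) (hα₁ : α < 1)
    {f : V → ℝ} (hf : Lip1 G f) (hgrad : grad G f y x = 1) :
    kappaAlpha G α x y / (1 - α) ≤ grad G (lap G f) x y := by
  have hD : (0 : ℝ) < G.dist x y := by exact_mod_cast hconn.pos_dist_of_ne hxy
  have hfyx : f y - f x = G.dist x y := by
    rw [grad, dist_comm, div_eq_one_iff_eq hD.ne'] at hgrad
    exact hgrad
  have hW := sub_le_W_mAlpha hconn hxy hα₀ hα₁.le hf.neg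
  simp only [Pi.neg_apply, lap_neg] at hW
  rw [kappaAlpha, grad, div_le_iff₀ (by linarith), one_sub_div hD.ne', div_mul_eq_mul_div,
    div_le_div_iff_of_pos_right hD]
  linarith

theorem kappaAlpha_div_mem (hconn : G.Connected) (hxy : x ≠ y) (hα : 1 / 2 ≤ α)
    (hα₁ : α < 1) :
    kappaAlpha G α x y / (1 - α) ∈
      {k : ℝ | ∃ f : V → ℝ, Lip1 G f ∧ grad G f y x = 1 ∧ k = grad G (lap G f) x y} := by
  have hD : (0 : ℝ) < G.dist x y := by exact_mod_cast hconn.pos_dist_of_ne hxy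
  obtain ⟨g, hg, hgxy, hgW⟩ := exists_lip1_eq_W_mAlpha hconn hxy hα hα₁.le
  refine ⟨-g, hg.neg, ?_, ?_⟩
  · rw [grad, dist_comm, Pi.neg_apply, Pi.neg_apply, neg_sub_neg, hgxy, div_self hD.ne']
  · rw [kappaAlpha, grad, lap_neg, lap_neg, ← hgW, hgxy]
    have : 1 - α ≠ 0 := by linarith
    field_simp
    ring

theorem kappaAlpha_div_eq_kappa (hconn : G.Connected) (hxy : x ≠ y) (hα : 1 / 2 ≤ α)
    (hα₁ : α < 1) : kappaAlpha G α x y / (1 - α) = kappa G x y := by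
  refine (IsLeast.csInf_eq ⟨kappaAlpha_div_mem hconn hxy hα hα₁, ?_⟩).symm
  rintro _ ⟨f, hf, hgrad, rfl⟩
  exact kappaAlpha_div_le hconn hxy (by linarith) hα₁ hf hgrad

end Curvature

end LLY

open LLY in
/-- **Münch–Wojciechowski.** For a finite connected simple graph `G` and
distinct vertices `x ≠ y`, `κ_α(x,y)/(1-α)` converges, as `α → 1⁻` (within `[0,1)`), to
the limit-free Laplacian formulation of the Lin–Lu–Yau curvature `κ(x,y)`. -/
theorem lly_limit_eq_laplacian_formulation {V : Type*} [Fintype V] (G : SimpleGraph V)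
    (hconn : G.Connected) (x y : V) (hne : x ≠ y) :
    Filter.Tendsto (fun α : ℝ => kappaAlpha G α x y / (1 - α))
      (nhdsWithin 1 (Set.Ico 0 1)) (nhds (kappa G x y)) := by
  have hhalf : ∀ᶠ α in nhdsWithin (1 : ℝ) (Set.Ico 0 1), 1 / 2 ≤ α :=
    nhdsWithin_le_nhds (eventually_ge_nhds (by norm_num))
  refine tendsto_const_nhds.congr' ?_
  filter_upwards [hhalf, self_mem_nhdsWithin] with α hα hαIco
  exact (kappaAlpha_div_eq_kappa hconn hne hα hαIco.2).symm
end

section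
/- Let G be a connected locally finite simple graph and let xy be an edge of G with d(x) = 3 and d(y) = 4. Suppose x and y have exactly one common neighbor u₁, and y has a neighbor u₂ ∉ N[x] with u₁u₂ ∈ E(G). Then κ(x,y) ≥ 1/12. -/
open scoped BigOperators

/-! Write `N(x) = {y, u₁, a}` and `N(y) = {x, u₁, u₂, b}` and normalise a competitor `f` by
`f x = 0`, `f y = 1`. Then
`Δf(x) - Δf(y) = 4/3 + f(a)/3 + f(u₁)/12 - f(b)/4 - f(u₂)/4`,
and the Lipschitz bounds along the edges `xa`, `yb`, `u₁u₂` and `xu₁` give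
`f(a) ≥ -1`, `f(b) ≤ 2`, `f(u₂) ≤ f(u₁) + 1` and `f(u₁) ≤ 1`, hence `Δf(x) - Δf(y) ≥ 1/12`. -/

namespace LLY

variable {V : Type*} {G : SimpleGraph V}

lemma lip1_dist (hconn : G.Connected) (x : V) : Lip1 G fun v => (G.dist x v : ℝ) := by
  intro p q
  dsimp only
  have hp : G.dist x p ≤ G.dist x q + G.dist p q := by
    rw [SimpleGraph.dist_comm (u := p)]
    exact hconn.dist_triangle
  have hq : G.dist x q ≤ G.dist x p + G.dist p q := hconn.dist_triangle
  rw [abs_sub_le_iff, sub_le_iff_le_add', sub_le_iff_le_add']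
  exact ⟨by exact_mod_cast hp, by exact_mod_cast hq⟩

lemma Lip1.abs_sub_le_one {f : V → ℝ} (hf : Lip1 G f) {a b : V} (hab : G.Adj a b) :
    |f a - f b| ≤ 1 := by
  simpa [SimpleGraph.dist_eq_one_iff_adj.mpr hab] using hf a b

lemma grad_of_adj (f : V → ℝ) {x y : V} (hxy : G.Adj x y) : grad G f x y = f x - f y := by
  simp [grad, SimpleGraph.dist_eq_one_iff_adj.mpr hxy]

lemma le_kappa_of_adj (hconn : G.Connected) {x y : V} (hxy : G.Adj x y) {c : ℝ}
    (h : ∀ f : V → ℝ, Lip1 G f → f y = f x + 1 → c ≤ lap G f x - lap G f y) :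
    c ≤ kappa G x y := by
  refine le_csInf ⟨_, _, lip1_dist hconn x, ?_, rfl⟩ ?_
  · simp [grad_of_adj _ hxy.symm, SimpleGraph.dist_eq_one_iff_adj.mpr hxy]
  · rintro k ⟨f, hf, hgrad, rfl⟩
    rw [grad_of_adj _ hxy]
    exact h f hf (by rw [grad_of_adj _ hxy.symm] at hgrad; linarith)

lemma deg_eq_card_of_neighborSet_eq {u : V} {s : Finset V} (hs : G.neighborSet u = ↑s) :
    deg G u = s.card := by
  rw [deg, hs, Nat.card_coe_set_eq, Set.ncard_coe_finset]

lemma lap_eq_of_neighborSet_eq {u : V} {s : Finset V} (hs : G.neighborSet u = ↑s)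
    (f : V → ℝ) : lap G f u = (∑ v ∈ s, (f v - f u)) / s.card := by
  rw [lap, deg_eq_card_of_neighborSet_eq hs, hs, finsum_mem_coe_finset]
  ring

lemma exists_neighborSet_eq_insert [DecidableEq V] {u : V} {t : Finset V}
    (ht : ↑t ⊆ G.neighborSet u) (hdeg : deg G u = t.card + 1) :
    ∃ a ∉ t, G.neighborSet u = ↑(insert a t) := by
  rw [deg, Nat.card_coe_set_eq] at hdeg
  have hdiff : (G.neighborSet u \ ↑t).ncard = 1 := by
    rw [Set.ncard_sdiff ht t.finite_toSet, hdeg, Set.ncard_coe_finset, Nat.add_sub_cancel_left]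
  obtain ⟨a, ha⟩ := Set.ncard_eq_one.mp hdiff
  have ha' : a ∈ G.neighborSet u \ ↑t := ha ▸ rfl
  refine ⟨a, ha'.2, ?_⟩
  rw [← Set.sdiff_union_of_subset ht, ha, Finset.coe_insert, Set.singleton_union]

end LLY

open LLY in
theorem curv_ge_twelfth_general {V : Type*} (G : SimpleGraph V)
    (hconn : G.Connected) (x y u₁ u₂ : V) (hxy : G.Adj x y)
    (hdx : deg G x = 3) (hdy : deg G y = 4)
    (hu₁ : G.neighborSet x ∩ G.neighborSet y = {u₁})
    (hu₂ : G.Adj y u₂ ∧ u₂ ∉ G.neighborSet x ∪ {x} ∧ G.Adj u₁ u₂) :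
    kappa G x y ≥ 1 / 12 := by
  classical
  obtain ⟨hyu₂, hu₂x, hu₁u₂⟩ := hu₂
  obtain ⟨hxu₁, hyu₁⟩ : G.Adj x u₁ ∧ G.Adj y u₁ := hu₁.ge rfl
  have hxu₂ : x ≠ u₂ := fun h => hu₂x (Or.inr h.symm)
  have hx_nmem : x ∉ ({u₁, u₂} : Finset V) := by simp [hxu₁.ne, hxu₂]
  obtain ⟨a, ha, hNx⟩ := exists_neighborSet_eq_insert (G := G) (u := x) (t := {y, u₁})
    (by simp [Set.insert_subset_iff, hxy, hxu₁]) (by rw [hdx, Finset.card_pair hyu₁.ne])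
  obtain ⟨b, hb, hNy⟩ := exists_neighborSet_eq_insert (G := G) (u := y) (t := {x, u₁, u₂})
    (by simp [Set.insert_subset_iff, hxy.symm, hyu₁, hyu₂])
    (by rw [hdy, Finset.card_insert_of_notMem hx_nmem, Finset.card_pair hu₁u₂.ne])
  have hxa : G.Adj x a := (Set.ext_iff.mp hNx a).mpr (by simp)
  have hyb : G.Adj y b := (Set.ext_iff.mp hNy b).mpr (by simp)
  refine le_kappa_of_adj hconn hxy fun f hf hfy => ?_
  rw [lap_eq_of_neighborSet_eq hNx, lap_eq_of_neighborSet_eq hNy,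
    ← deg_eq_card_of_neighborSet_eq hNx, ← deg_eq_card_of_neighborSet_eq hNy, hdx, hdy,
    Finset.sum_insert ha, Finset.sum_pair hyu₁.ne, Finset.sum_insert hb,
    Finset.sum_insert hx_nmem, Finset.sum_pair hu₁u₂.ne]
  have hfa := abs_le.mp (hf.abs_sub_le_one hxa)
  have hfb := abs_le.mp (hf.abs_sub_le_one hyb)
  have hfu₁ := abs_le.mp (hf.abs_sub_le_one hxu₁)
  have hfu₂ := abs_le.mp (hf.abs_sub_le_one hu₁u₂)
  push_cast
  linarith [hfa.1, hfb.2, hfu₁.2, hfu₂.2]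

open LLY in
/-- If `xy` is an edge with `d(x) = 3`, `d(y) = 4`, `x` and `y` have
exactly one common neighbor `u₁`, and `y` has a neighbor `u₂ ∉ N[x]` with `u₁u₂ ∈ E(G)`,
then `κ(x,y) ≥ 1/12`. -/
theorem curv_ge_twelfth {V : Type*} (G : SimpleGraph V)
    (hconn : G.Connected) (hfin : LocFin G) (x y u₁ u₂ : V) (hxy : G.Adj x y)
    (hdx : deg G x = 3) (hdy : deg G y = 4)
    (hu₁ : G.neighborSet x ∩ G.neighborSet y = {u₁})
    (hu₂ : G.Adj y u₂ ∧ u₂ ∉ G.neighborSet x ∪ {x} ∧ G.Adj u₁ u₂) :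
    kappa G x y ≥ 1 / 12 :=
  curv_ge_twelfth_general G hconn x y u₁ u₂ hxy hdx hdy hu₁ hu₂
end
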